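/- Let L : ℝⁿ × ℝⁿ × ℝ → ℝ be continuously differentiable, and let T : ℝⁿ × ℝ × ℝⁿ → ℝ (arguments (q, S, p)) and ℱ^fr : ℝⁿ × ℝ × ℝⁿ → ℝⁿ be given with T > 0 everywhere. On N := ℝⁿ × ℝ × ℝⁿ with points n = (q, S, p), define Δ_N(n) := {(δq, δS, δp) : −T(q, S, p)·δS = ⟨ℱ^fr(q, S, p), δq⟩} and the presymplectic form ω_N((a, σ, c), (a′, σ′, c′)) := ⟨a, c′⟩ − ⟨a′, c⟩. Then a C¹ curve (q(t), S(t), v(t), p(t)) satisfies the Lagrange-Dirac system [p(t) = (∂L/∂v)(q(t), v(t), S(t)) and ((q̇, Ṡ, ṗ), (−∂L/∂q, −∂L/∂S, v)) ∈ D(ω_N, Δ_N(q, S, p)) at every t] if and only if for all t: (ṗ − ∂L/∂q(q, v, S))·T(q, S, p) = −∂L/∂S(q, v, S)·ℱ^fr(q, S, p), T(q, S, p)·Ṡ = −⟨ℱ^fr(q, S, p), q̇⟩, v = q̇, and p = (∂L/∂v)(q, v, S). -/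
import Mathlib


open scoped RealInnerProductSpace

noncomputable section

/-- `ℝⁿ` with the Euclidean inner product. -/
abbrev E (n : ℕ) : Type := EuclideanSpace ℝ (Fin n)

/-- The space `N = T*Q × ℝ`, with points `n = (q, S, p)`. -/
abbrev N (n : ℕ) : Type := E n × ℝ × E n

/-- Gradient `∂L/∂q` of the Lagrangian `L(q, v, S)`. -/
noncomputable def gQ {n : ℕ} (L : E n → E n → ℝ → ℝ) (q v : E n) (S : ℝ) : E n :=
  gradient (fun x => L x v S) q

/-- Gradient `∂L/∂v` of the Lagrangian `L(q, v, S)`. -/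
noncomputable def gV {n : ℕ} (L : E n → E n → ℝ → ℝ) (q v : E n) (S : ℝ) : E n :=
  gradient (fun y => L q y S) v

/-- Partial derivative `∂L/∂S` of the Lagrangian `L(q, v, S)`. -/
noncomputable def LS {n : ℕ} (L : E n → E n → ℝ → ℝ) (q v : E n) (S : ℝ) : ℝ :=
  deriv (L q v) S

/-- The Dirac structure induced by a form `ω` and a subspace `Δ`, covectors being
identified with vectors via the pairing `pair` (the Euclidean inner product). -/
def Dirac {F : Type*} (pair ω : F → F → ℝ) (Δ : Set F) : Set (F × F) :=
  {p | p.1 ∈ Δ ∧ ∀ w ∈ Δ, pair p.2 w = ω p.1 w}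

/-- Euclidean pairing on `N`. -/
def pairN {n : ℕ} (ζ w : N n) : ℝ :=
  ⟪ζ.1, w.1⟫ + ζ.2.1 * w.2.1 + ⟪ζ.2.2, w.2.2⟫

/-- Presymplectic form `ω_N((a,σ,c),(a',σ',c')) = ⟨a,c'⟩ − ⟨a',c⟩` on `N`. -/
def omegaN {n : ℕ} (x y : N n) : ℝ :=
  ⟪x.1, y.2.2⟫ - ⟪y.1, x.2.2⟫

/-- the Lagrange-Dirac system on `N = T*Q × ℝ`, with Dirac differential
`(−∂L/∂q, −∂L/∂S, v)` based at `(q, S, ∂L/∂v)`, is equivalent to the implicit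
differential-algebraic equations. -/
theorem statement15 {n : ℕ} (L : E n → E n → ℝ → ℝ)
    (hL : ContDiff ℝ 1 (fun x : E n × E n × ℝ => L x.1 x.2.1 x.2.2))
    (T : E n → ℝ → E n → ℝ) (Ffr' : E n → ℝ → E n → E n)
    (hT : ∀ (q : E n) (S : ℝ) (p : E n), 0 < T q S p)
    (q v p : ℝ → E n) (S : ℝ → ℝ)
    (hq : ContDiff ℝ 1 q) (hv : ContDiff ℝ 1 v) (hp : ContDiff ℝ 1 p)
    (hS : ContDiff ℝ 1 S) :
    (∀ t : ℝ, p t = gV L (q t) (v t) (S t) ∧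
      ((⟨deriv q t, deriv S t, deriv p t⟩ : N n),
       (⟨-(gQ L (q t) (v t) (S t)), -(LS L (q t) (v t) (S t)), v t⟩ : N n)) ∈
        Dirac pairN omegaN
          {δ : N n | -(T (q t) (S t) (p t)) * δ.2.1 = ⟪Ffr' (q t) (S t) (p t), δ.1⟫}) ↔
    (∀ t : ℝ,
      T (q t) (S t) (p t) • (deriv p t - gQ L (q t) (v t) (S t)) =
        -(LS L (q t) (v t) (S t) • Ffr' (q t) (S t) (p t)) ∧
      T (q t) (S t) (p t) * deriv S t = -⟪Ffr' (q t) (S t) (p t), deriv q t⟫ ∧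
      v t = deriv q t ∧ p t = gV L (q t) (v t) (S t)) := by
  constructor
  · intro h t
    obtain ⟨hpt, hD⟩ := h t
    obtain ⟨hmem, hall⟩ := hD
    simp only [Set.mem_setOf_eq] at hmem
    have hTpos := hT (q t) (S t) (p t)
    have hTne : T (q t) (S t) (p t) ≠ 0 := ne_of_gt hTpos
    -- v = q̇
    have hv : v t = deriv q t := by
      apply ext_inner_right ℝ
      intro c
      have := hall ⟨0, 0, c⟩ (by simp [Set.mem_setOf_eq])
      simp only [pairN, omegaN, inner_zero_right, mul_zero, add_zero, zero_add,
        inner_zero_left, sub_zero] at this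
      linarith
    refine ⟨?_, by linarith, hv, hpt⟩
    apply ext_inner_right ℝ
    intro a
    have hmem2 : (⟨a, -⟪Ffr' (q t) (S t) (p t), a⟫ / T (q t) (S t) (p t), 0⟩ : N n) ∈
        {δ : N n | -(T (q t) (S t) (p t)) * δ.2.1 = ⟪Ffr' (q t) (S t) (p t), δ.1⟫} := by
      simp only [Set.mem_setOf_eq]
      field_simp
    have heq := hall _ hmem2
    simp only [pairN, omegaN, inner_zero_right, inner_zero_left, zero_sub, add_zero,
      inner_neg_left] at heq
    rw [real_inner_smul_left, inner_sub_left, inner_neg_left, real_inner_smul_left]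
    rw [real_inner_comm (deriv p t) a] at heq
    set Fa := ⟪Ffr' (q t) (S t) (p t), a⟫ with hFa
    set Ga := ⟪gQ L (q t) (v t) (S t), a⟫ with hGa
    set Pa := ⟪deriv p t, a⟫ with hPa
    field_simp at heq
    linarith
  · intro h t
    obtain ⟨h1, h2, h3, h4⟩ := h t
    have hTpos := hT (q t) (S t) (p t)
    have hTne : T (q t) (S t) (p t) ≠ 0 := ne_of_gt hTpos
    refine ⟨h4, ?_, ?_⟩
    · simp only [Set.mem_setOf_eq]
      linarith
    · rintro ⟨a, σ, c⟩ hw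
      simp only [Set.mem_setOf_eq] at hw
      have hinner := congrArg (fun x => ⟪x, a⟫) h1
      simp only [real_inner_smul_left, inner_sub_left, inner_neg_left] at hinner
      have key : ⟪deriv p t, a⟫ - ⟪gQ L (q t) (v t) (S t), a⟫ = LS L (q t) (v t) (S t) * σ := by
        have : T (q t) (S t) (p t) * (⟪deriv p t, a⟫ - ⟪gQ L (q t) (v t) (S t), a⟫)
            = T (q t) (S t) (p t) * (LS L (q t) (v t) (S t) * σ) := by
          rw [hinner, ← hw]; ring
        exact mul_left_cancel₀ hTne this
      simp only [pairN, omegaN, inner_neg_left]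
      have hcomm : ⟪a, deriv p t⟫ = ⟪deriv p t, a⟫ := real_inner_comm _ _
      have hvc : ⟪v t, c⟫ = ⟪deriv q t, c⟫ := by rw [h3]
      linarith

end
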